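/- Let Y be a complex Banach space, let Z be a bounded operator on Y, let K ⊆ iℝ be compact with σ(Z) ⊆ K, and let Ψ : C(K) → L(Y) be a continuous unital algebra homomorphism with Ψ(ι) = Z, where ι(z) = z. If g ∈ C(K) and g(w) = 0 for every w ∈ σ(Z), then Ψ(g) = 0. -/

import Mathlib

open Complex MeasureTheory Filter Topology
open scoped ENNReal NNReal Classical

noncomputable section

variable {X : Type*} [NormedAddCommGroup X] [NormedSpace ℂ X]

/-- `Ψ` is a bounded `C(K)`-calculus for the bounded operator `Z` : a continuous unital
algebra homomorphism `C(K) → L(X)` mapping the identity function `ι(z) = z` to `Z`. -/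
def IsCKCalculus (K : Set ℂ) (Z : X →L[ℂ] X) (Ψ : C(↥K, ℂ) → X →L[ℂ] X) : Prop :=
  (∀ g h : C(↥K, ℂ), Ψ (g + h) = Ψ g + Ψ h) ∧
  (∀ (c : ℂ) (g : C(↥K, ℂ)), Ψ (c • g) = c • Ψ g) ∧
  (∀ g h : C(↥K, ℂ), Ψ (g * h) = Ψ g * Ψ h) ∧
  Ψ 1 = 1 ∧
  (∃ C : ℝ, ∀ g : C(↥K, ℂ), ‖Ψ g‖ ≤ C * ⨆ z : K, ‖g z‖) ∧
  Ψ ⟨fun z => (z : ℂ), continuous_subtype_val⟩ = Z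

/-!
Let `Ψ : C(T) → A` be a continuous algebra homomorphism and `u ∈ C(T)`. If `l ∉ σ(Ψ u)` and
`f` is supported where `|u - l| ≤ r`, then `Ψ f = Ψ(f (l - u)ⁿ) (l - Ψ u)⁻ⁿ` has norm at most
`‖Ψ‖ ‖f‖ (r ‖(l - Ψ u)⁻¹‖)ⁿ`, which tends to `0` for small `r`. Hence every point `t` with
`u t ∉ σ(Ψ u)` carries a bump function in the kernel of `Ψ`. The kernel is a closed ideal of
`C(T)`, so it consists of the functions vanishing on a closed set, which therefore lies in
`u⁻¹(σ(Ψ u))`.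
-/

section

variable {T A : Type*} [TopologicalSpace T] [CompactSpace T] [NormedRing A] [NormedAlgebra ℂ A]

theorem ContinuousMap.norm_mul_pow_le {f m : C(T, ℂ)} {r : ℝ} (hr : 0 ≤ r)
    (hm : ∀ t, f t ≠ 0 → ‖m t‖ ≤ r) (n : ℕ) : ‖f * m ^ n‖ ≤ ‖f‖ * r ^ n := by
  refine (ContinuousMap.norm_le _ (by positivity)).2 fun t => ?_
  simp only [ContinuousMap.mul_apply, ContinuousMap.pow_apply, norm_mul, norm_pow]
  by_cases hft : f t = 0
  · rw [hft, norm_zero, zero_mul]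
    positivity
  · exact mul_le_mul (f.norm_coe_le_norm t) (pow_le_pow_left₀ (norm_nonneg _) (hm t hft) n)
      (by positivity) (norm_nonneg _)

theorem ContinuousAlgHom.map_eq_zero_of_forall_ne_zero_norm_sub_le (Ψ : C(T, ℂ) →A[ℂ] A)
    {u : C(T, ℂ)} {l : ℂ} (hl : l ∉ spectrum ℂ (Ψ u)) {r : ℝ} (hr : 0 ≤ r)
    (hrR : r * ‖Ring.inverse (algebraMap ℂ A l - Ψ u)‖ < 1)
    {f : C(T, ℂ)} (hf : ∀ t, f t ≠ 0 → ‖l - u t‖ ≤ r) : Ψ f = 0 := by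
  set m : C(T, ℂ) := algebraMap ℂ C(T, ℂ) l - u
  set R := Ring.inverse (algebraMap ℂ A l - Ψ u)
  have hΨm : Ψ m = algebraMap ℂ A l - Ψ u := by rw [map_sub, AlgHomClass.commutes]
  have hunit : IsUnit (algebraMap ℂ A l - Ψ u) := spectrum.notMem_iff.mp hl
  have hfactor (n : ℕ) : Ψ f = Ψ (f * m ^ n) * R ^ n := by
    rw [map_mul, map_pow, mul_assoc, hΨm, Ring.inverse_pow, Ring.mul_inverse_cancel _ (hunit.pow n),
      mul_one]
  have hbound (n : ℕ) :
      ‖Ψ f‖ ≤ ‖Ψ.toContinuousLinearMap‖ * ‖f‖ * (r * ‖R‖) ^ (n + 1) := calc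
    ‖Ψ f‖ ≤ ‖Ψ (f * m ^ (n + 1))‖ * ‖R ^ (n + 1)‖ := hfactor (n + 1) ▸ norm_mul_le _ _
    _ ≤ ‖Ψ.toContinuousLinearMap‖ * (‖f‖ * r ^ (n + 1)) * ‖R‖ ^ (n + 1) := by
      gcongr
      · exact (Ψ.toContinuousLinearMap.le_opNorm _).trans (by
          gcongr; exact ContinuousMap.norm_mul_pow_le hr (fun t ht => by simpa [m] using hf t ht) _)
      · exact norm_pow_le' R n.succ_pos
    _ = ‖Ψ.toContinuousLinearMap‖ * ‖f‖ * (r * ‖R‖) ^ (n + 1) := by ring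
  have hlim : Tendsto (fun n : ℕ => ‖Ψ.toContinuousLinearMap‖ * ‖f‖ * (r * ‖R‖) ^ (n + 1))
      atTop (𝓝 0) := by
    simpa using ((tendsto_pow_atTop_nhds_zero_of_lt_one (by positivity) hrR).comp
      (tendsto_add_atTop_nat 1)).const_mul (‖Ψ.toContinuousLinearMap‖ * ‖f‖)
  exact norm_le_zero_iff.mp (ge_of_tendsto' hlim hbound)

theorem ContinuousAlgHom.exists_map_eq_zero_apply_ne_zero (Ψ : C(T, ℂ) →A[ℂ] A)
    {u : C(T, ℂ)} {x : T} (hx : u x ∉ spectrum ℂ (Ψ u)) : ∃ f : C(T, ℂ), Ψ f = 0 ∧ f x ≠ 0 := by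
  set r := (‖Ring.inverse (algebraMap ℂ A (u x) - Ψ u)‖ + 1)⁻¹
  have hr : 0 < r := by positivity
  have hrR : r * ‖Ring.inverse (algebraMap ℂ A (u x) - Ψ u)‖ < 1 := by
    rw [inv_mul_lt_one₀ (by positivity)]
    exact lt_add_one _
  let f : C(T, ℂ) := ⟨fun t => ((max 0 (r - ‖u x - u t‖) : ℝ) : ℂ), by fun_prop⟩
  refine ⟨f, Ψ.map_eq_zero_of_forall_ne_zero_norm_sub_le hx hr.le hrR fun t ht => ?_, ?_⟩
  · by_contra! hlt
    exact ht (by simp [f, hlt.le])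
  · simp [f, hr.le, hr.ne']

theorem ContinuousAlgHom.map_eq_zero_of_forall_mem_spectrum [T2Space T] (Ψ : C(T, ℂ) →A[ℂ] A)
    (u : C(T, ℂ)) {g : C(T, ℂ)} (hg : ∀ t, u t ∈ spectrum ℂ (Ψ u) → g t = 0) : Ψ g = 0 := by
  have hker : IsClosed (RingHom.ker Ψ : Set C(T, ℂ)) := isClosed_singleton.preimage Ψ.continuous
  change g ∈ RingHom.ker Ψ
  rw [← ContinuousMap.idealOfSet_ofIdeal_isClosed hker, ContinuousMap.mem_idealOfSet]
  intro x hx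
  refine hg x (not_not.mp fun hres => hx ?_)
  obtain ⟨f, hf, hfx⟩ := Ψ.exists_map_eq_zero_apply_ne_zero hres
  exact ContinuousMap.mem_setOfIdeal.mpr ⟨f, hf, hfx⟩

end

section

variable {K : Set ℂ} {Z : X →L[ℂ] X} {Ψ : C(↥K, ℂ) → X →L[ℂ] X}

theorem IsCKCalculus.continuous [CompactSpace K] (hΨ : IsCKCalculus K Z Ψ) : Continuous Ψ := by
  obtain ⟨hadd, -, -, -, ⟨C, hC⟩, -⟩ := hΨ
  refine AddMonoidHomClass.continuous_of_bound (AddMonoidHom.mk' Ψ hadd) C fun f => ?_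
  simpa [ContinuousMap.norm_eq_iSup_norm] using hC f

def IsCKCalculus.toContinuousAlgHom [CompactSpace K] (hΨ : IsCKCalculus K Z Ψ) :
    C(K, ℂ) →A[ℂ] (X →L[ℂ] X) where
  toFun := Ψ
  map_one' := hΨ.2.2.2.1
  map_mul' := hΨ.2.2.1
  map_zero' := by simpa using hΨ.2.1 0 0
  map_add' := hΨ.1
  commutes' c := by
    rw [Algebra.algebraMap_eq_smul_one, Algebra.algebraMap_eq_smul_one, hΨ.2.1, hΨ.2.2.2.1]
  cont := hΨ.continuous

end

theorem ck_calculus_vanishing_general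
    (Z : X →L[ℂ] X)
    (K : Set ℂ) (hK : IsCompact K)
    (Ψ : C(↥K, ℂ) → X →L[ℂ] X) (hΨ : IsCKCalculus K Z Ψ)
    (g : C(↥K, ℂ)) (hg : ∀ z : ↥K, (z : ℂ) ∈ spectrum ℂ Z → g z = 0) :
    Ψ g = 0 := by
  have : CompactSpace K := isCompact_iff_compactSpace.mp hK
  have hι : hΨ.toContinuousAlgHom ⟨fun z => (z : ℂ), continuous_subtype_val⟩ = Z := hΨ.2.2.2.2.2
  exact hΨ.toContinuousAlgHom.map_eq_zero_of_forall_mem_spectrum _ (hι ▸ hg)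

/-- **Vanishing of the `C(K)`-calculus on functions vanishing on the spectrum**
(Lemma 3.1(d)). -/
theorem ck_calculus_vanishing [CompleteSpace X]
    (Z : X →L[ℂ] X)
    (K : Set ℂ) (hK : IsCompact K) (hKi : K ⊆ {z : ℂ | z.re = 0})
    (hspec : spectrum ℂ Z ⊆ K)
    (Ψ : C(↥K, ℂ) → X →L[ℂ] X) (hΨ : IsCKCalculus K Z Ψ)
    (g : C(↥K, ℂ)) (hg : ∀ z : ↥K, (z : ℂ) ∈ spectrum ℂ Z → g z = 0) :
    Ψ g = 0 :=
  ck_calculus_vanishing_general Z K hK Ψ hΨ g hg
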